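/- arXiv:2307.08149 — 3 statements merged into one kernel-verified Lean document; each statement's English description precedes it below -/
import Mathlib

section
/- Let G be a connected graph with at least 3 vertices, let z be a vertex of degree 1, and let u be the unique neighbor of z. Then u is an isolated vertex in the strong resolving graph G_SR: u is not mutually maximally distant from any vertex of G. -/
/-! If `z` is a leaf hanging off `u`, then every vertex `w ≠ z` is one step closer to `u` than to
`z`, so `z` itself is a neighbour of `u` further from `w` than `u` is. For `w = z`, connectivity and
`|V| ≥ 3` give a neighbour `y ≠ z` of `u`; it is at distance `2` from `z`, while `u` is at
distance `1`. So `u` is maximally distant from no vertex at all. -/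

namespace SimpleGraph

variable {V : Type*}

def IsMaximallyDistantFrom (G : SimpleGraph V) (u v : V) : Prop :=
  ∀ y, G.Adj u y → G.dist y v ≤ G.dist u v

section Leaf

variable {G : SimpleGraph V} {z u : V}

section Neighbors

variable [Fintype (G.neighborSet z)]

lemma eq_of_adj_of_degree_eq_one (hz : G.degree z = 1) (hu : G.Adj z u) {y : V}
    (hy : G.Adj z y) : y = u :=
  (degree_eq_one_iff_existsUnique_adj.mp hz).unique hy hu

lemma dist_lt_dist_of_degree_eq_one (hz : G.degree z = 1) (hu : G.Adj z u) {w : V}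
    (hw : G.Reachable z w) (hwz : w ≠ z) : G.dist u w < G.dist z w := by
  obtain ⟨p, hp⟩ := hw.exists_walk_length_eq_dist
  cases p with
  | nil => exact absurd rfl hwz
  | cons hx q =>
    obtain rfl := eq_of_adj_of_degree_eq_one hz hu hx
    have := dist_le q
    rw [Walk.length_cons] at hp
    omega

end Neighbors

variable [Fintype V] [DecidableRel G.Adj]

lemma Connected.exists_adj_ne_of_degree_eq_one (hG : G.Connected) (hcard : 3 ≤ Fintype.card V)
    (hz : G.degree z = 1) (hu : G.Adj z u) : ∃ y, G.Adj u y ∧ y ≠ z := by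
  classical
  obtain ⟨v, -, hv⟩ : ∃ v ∈ Finset.univ, v ∉ ({z, u} : Finset V) := by
    refine Finset.exists_mem_notMem_of_card_lt_card ?_
    have := Finset.card_le_two (a := z) (b := u)
    rw [Finset.card_univ]
    omega
  obtain ⟨d, -, hfst, hsnd⟩ :=
    (hG z v).some.exists_boundary_dart {z, u} (by simp) (by simpa using hv)
  simp only [Set.mem_insert_iff, Set.mem_singleton_iff, not_or] at hfst hsnd
  rcases hfst with hdz | hdu
  · exact absurd (eq_of_adj_of_degree_eq_one hz hu (hdz ▸ d.adj)) hsnd.2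
  · exact ⟨d.snd, hdu ▸ d.adj, hsnd.1⟩

theorem Connected.not_isMaximallyDistantFrom_of_degree_eq_one (hG : G.Connected)
    (hcard : 3 ≤ Fintype.card V) (hz : G.degree z = 1) (hu : G.Adj z u) (w : V) :
    ¬ G.IsMaximallyDistantFrom u w := by
  intro hmax
  by_cases hwz : w = z
  · subst hwz
    obtain ⟨y, huy, hyw⟩ := hG.exists_adj_ne_of_degree_eq_one hcard hz hu
    have hy_not_adj : ¬ G.Adj y w :=
      fun hyw' => G.ne_of_adj huy (eq_of_adj_of_degree_eq_one hz hu hyw'.symm).symm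
    have hfar := hG.one_lt_dist_of_ne_of_not_adj hyw hy_not_adj
    have hnear := hmax y huy
    rw [dist_eq_one_iff_adj.mpr hu.symm] at hnear
    omega
  · have := hmax z hu.symm
    have := dist_lt_dist_of_degree_eq_one hz hu (hG z w) hwz
    omega

end Leaf

end SimpleGraph

/-- In a connected graph with at least 3 vertices, the unique neighbour u of a
degree-1 vertex z is isolated in the strong resolving graph: u is not mutually
maximally distant from any vertex. -/
theorem stmt_9 {V : Type*} [Fintype V] (G : SimpleGraph V) [DecidableRel G.Adj]
    (hG : G.Connected) (hcard : 3 ≤ Fintype.card V)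
    (z u : V) (hz : G.degree z = 1) (hadj : G.Adj z u) :
    ∀ w : V, ¬ ((∀ y, G.Adj u y → G.dist y w ≤ G.dist u w) ∧
                (∀ y, G.Adj w y → G.dist y u ≤ G.dist w u)) :=
  fun w hmmd => hG.not_isMaximallyDistantFrom_of_degree_eq_one hcard hz hadj w hmmd.1
end

section
/- If u and v are mutually maximally distant vertices in a connected graph G, then for any strong resolving set S of G, at least one of u and v belongs to S. -/
lemma aux_md {V : Type*} (G : SimpleGraph V) (hG : G.Connected)
    (u v s : V) (hmd : ∀ y, G.Adj v y → G.dist y u ≤ G.dist v u)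
    (h : G.dist u s = G.dist u v + G.dist v s) : s = v := by
  by_contra hvs
  have hvs' : v ≠ s := fun e => hvs e.symm
  obtain ⟨p, hp⟩ := hG.exists_walk_length_eq_dist v s
  cases p with
  | nil => exact hvs' rfl
  | cons ha q =>
    rename_i y
    have hql : G.dist y s ≤ q.length := SimpleGraph.dist_le q
    have hlen : q.length + 1 = G.dist v s := by simpa using hp
    have ht : G.dist u s ≤ G.dist u y + G.dist y s := hG.dist_triangle
    have hy : G.dist u y ≤ G.dist u v := by
      have := hmd y ha
      rwa [SimpleGraph.dist_comm, SimpleGraph.dist_comm (u := v)] at this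
    omega

/-- If u and v are mutually maximally distant in a connected graph G, then any strong
resolving set of G contains u or v. -/
theorem stmt_10 {V : Type*} [Fintype V] (G : SimpleGraph V) (hG : G.Connected)
    (u v : V) (hne : u ≠ v)
    (hmmd : (∀ y, G.Adj u y → G.dist y v ≤ G.dist u v) ∧
            (∀ y, G.Adj v y → G.dist y u ≤ G.dist v u))
    (S : Set V)
    (hS : ∀ x y : V, x ≠ y → ∃ s ∈ S,
        G.dist x s = G.dist x y + G.dist y s ∨ G.dist y s = G.dist y x + G.dist x s) :
    u ∈ S ∨ v ∈ S := by
  obtain ⟨s, hsS, hcase⟩ := hS u v hne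
  rcases hcase with h | h
  · right
    rwa [← aux_md G hG u v s hmmd.2 h]
  · left
    rwa [← aux_md G hG v u s hmmd.1 h]
end

section
/- Let X be a vertex separator of a connected graph G separating s from both x and y (with s on one side and x, y on the other side or in X). If the vector d_X(s) resolves the pair of vectors (d_X(x), d_X(y)), then d(s,x) ≠ d(s,y); that is, s resolves the pair x, y. -/
open SimpleGraph

lemma sep_dist_eq {V : Type*} (G : SimpleGraph V) (hG : G.Connected)
    {k : ℕ} (hk : 0 < k) (vtx : Fin k → V) (s x : V)
    (hsx : ∀ p : G.Walk s x, ∃ i, vtx i ∈ p.support) :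
    G.dist s x = ⨅ i, G.dist x (vtx i) + G.dist s (vtx i) := by
  classical
  haveI : Nonempty (Fin k) := ⟨⟨0, hk⟩⟩
  apply le_antisymm
  · apply le_ciInf
    intro i
    calc G.dist s x ≤ G.dist s (vtx i) + G.dist (vtx i) x := hG.dist_triangle
    _ = G.dist x (vtx i) + G.dist s (vtx i) := by rw [G.dist_comm (u := vtx i) (v := x)]; omega
  · obtain ⟨p, hp⟩ := hG.exists_walk_length_eq_dist s x
    obtain ⟨i, hi⟩ := hsx p
    refine le_trans (ciInf_le (OrderBot.bddBelow _) i) ?_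
    have h1 : G.dist s (vtx i) ≤ (p.takeUntil _ hi).length := G.dist_le _
    have h2 : G.dist (vtx i) x ≤ (p.dropUntil _ hi).length := G.dist_le _
    have h3 : (p.takeUntil _ hi).length + (p.dropUntil _ hi).length = p.length := by
      conv_rhs => rw [← p.take_spec hi]
      exact (Walk.length_append _ _).symm
    rw [G.dist_comm (u := x) (v := vtx i)]
    omega

/-- If X = {v_1,...,v_k} separates s from x and from y (every walk from s to x, resp. y,
meets X), and the distance vector of s to X resolves the pair of distance vectors of
x and y to X, then d(s,x) ≠ d(s,y). -/
theorem stmt_11 {V : Type*} [Fintype V] (G : SimpleGraph V) (hG : G.Connected)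
    (k : ℕ) (hk : 0 < k) (vtx : Fin k → V) (s x y : V)
    (hsx : ∀ p : G.Walk s x, ∃ i, vtx i ∈ p.support)
    (hsy : ∀ p : G.Walk s y, ∃ i, vtx i ∈ p.support)
    (hres : (⨅ i, G.dist x (vtx i) + G.dist s (vtx i)) ≠
            (⨅ i, G.dist y (vtx i) + G.dist s (vtx i))) :
    G.dist s x ≠ G.dist s y := by
  rw [sep_dist_eq G hG hk vtx s x hsx, sep_dist_eq G hG hk vtx s y hsy]
  exact hres
end
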